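/- arXiv:2508.14484 — 3 statements merged into one kernel-verified Lean document; each statement's English description precedes it below -/
import Mathlib

section
/- The element x^{2n}·(2 + βx)/(1 + βx) does not belong to the ℚ(β)-subalgebra of ℚ(β)(x) generated by x·(2 + βx)/(1 + βx) and x^2. -/
open Polynomial

private lemma no_rat_sqrt2 (c : ℚ) : c ^ 2 ≠ 2 := by
  intro h
  apply irrational_sqrt_two
  refine ⟨|c|, ?_⟩
  have h' : ((c : ℝ)) ^ 2 = 2 := by exact_mod_cast h
  have h2 : Real.sqrt 2 = |(c : ℝ)| := by
    rw [← h', Real.sqrt_sq_eq_abs]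
  rw [h2]
  push_cast
  rfl

private lemma no_ratfunc_sqrt2 (w : RatFunc ℚ) : w * w ≠ 2 := by
  intro h
  have hq : w.denom ≠ 0 := w.denom_ne_zero
  have hι : Function.Injective (algebraMap ℚ[X] (RatFunc ℚ)) :=
    IsFractionRing.injective _ _
  have hqK : algebraMap ℚ[X] (RatFunc ℚ) w.denom ≠ 0 :=
    (map_ne_zero_iff _ hι).mpr hq
  have key : algebraMap ℚ[X] (RatFunc ℚ) w.num = w * algebraMap ℚ[X] (RatFunc ℚ) w.denom := by
    have h0 := RatFunc.num_div_denom w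
    rwa [div_eq_iff hqK] at h0
  have key2 : algebraMap ℚ[X] (RatFunc ℚ) (w.num * w.num)
      = algebraMap ℚ[X] (RatFunc ℚ) (2 * (w.denom * w.denom)) := by
    simp only [map_mul, map_ofNat]
    linear_combination (algebraMap ℚ[X] (RatFunc ℚ) w.num
      + algebraMap ℚ[X] (RatFunc ℚ) w.denom * w) * key
      + algebraMap ℚ[X] (RatFunc ℚ) w.denom * algebraMap ℚ[X] (RatFunc ℚ) w.denom * h
  have key3 : w.num * w.num = 2 * (w.denom * w.denom) := hι key2
  have key4 : w.num * w.num = (C (2:ℚ)) * (w.denom * w.denom) := by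
    rwa [map_ofNat (C : ℚ →+* ℚ[X]) 2]
  have hlc := congrArg Polynomial.leadingCoeff key4
  simp only [leadingCoeff_mul, leadingCoeff_C] at hlc
  have hlcq : w.denom.leadingCoeff ≠ 0 := leadingCoeff_ne_zero.mpr hq
  apply no_rat_sqrt2 (w.num.leadingCoeff / w.denom.leadingCoeff)
  field_simp
  linear_combination hlc

/-- In `ℚ(β)(x)`, for `n ≥ 1` the element `x^{2n}(2+βx)/(1+βx)` does not belong
to the `ℚ(β)`-subalgebra generated by `x(2+βx)/(1+βx)` and `x^2`. -/
theorem q_even_not_polynomial_in_odd (n : ℕ) (hn : 1 ≤ n) :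
    letI F := RatFunc ℚ        -- the field ℚ(β)
    letI K := RatFunc F        -- the field ℚ(β)(x)
    letI β : K := RatFunc.C RatFunc.X
    letI x : K := RatFunc.X
    x ^ (2 * n) * (2 + β * x) / (1 + β * x) ∉
      Algebra.adjoin F ({x * (2 + β * x) / (1 + β * x), x ^ 2} : Set K) := by
  intro hmem
  -- transcendental real number t
  have ht : Transcendental ℚ (liouvilleNumber 3) := fun halg =>
    ((liouville_liouvilleNumber (m := 3) (by norm_num)).transcendental)
      ((IsFractionRing.isAlgebraic_iff ℤ ℚ ℝ).mpr halg)
  set t : ℝ := liouvilleNumber 3 with htdef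
  have ht0 : t ≠ 0 := fun h => ht (h ▸ isAlgebraic_zero)
  have hg : Function.Injective ((Polynomial.aeval t : ℚ[X] →ₐ[ℚ] ℝ) : ℚ[X] →+* ℝ) :=
    transcendental_iff_injective.mp ht
  set φ : RatFunc ℚ →+* ℝ := IsFractionRing.lift hg with hφdef
  have hφX : φ RatFunc.X = t := by
    rw [← RatFunc.algebraMap_X, hφdef, IsFractionRing.lift_algebraMap]
    simp
  set r : ℝ := Real.sqrt 2 with hrdef
  have hr : r ^ 2 = 2 := Real.sq_sqrt (by norm_num)
  have hrpos : 0 < r := Real.sqrt_pos.mpr (by norm_num)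
  set s : ℝ := r / t with hsdef
  have hs0 : s ≠ 0 := div_ne_zero hrpos.ne' ht0
  have hts : t * s = r := by rw [hsdef]; field_simp
  set ev : (RatFunc ℚ)[X] →+* ℝ := Polynomial.eval₂RingHom φ s with hevdef
  set ι : (RatFunc ℚ)[X] →+* RatFunc (RatFunc ℚ) :=
    (algebraMap (RatFunc ℚ)[X] (RatFunc (RatFunc ℚ))) with hιdef
  have hιinj : Function.Injective ι := IsFractionRing.injective _ _
  have hevX : ev X = s := Polynomial.eval₂_X φ s
  have hevC : ∀ c : RatFunc ℚ, ev (C c) = φ c := fun c => Polynomial.eval₂_C φ s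
  have hιX : ι X = RatFunc.X := RatFunc.algebraMap_X
  have hιC : ∀ c : RatFunc ℚ, ι (C c) = RatFunc.C c := fun c => RatFunc.algebraMap_C c
  -- the denominator polynomial
  have hB0K : ι (C (RatFunc.X : RatFunc ℚ) * X + 1) = 1 + RatFunc.C (RatFunc.X : RatFunc ℚ) * RatFunc.X := by
    simp only [map_add, map_mul, map_one, hιX, hιC]; ring
  have hB0ev : ev (C (RatFunc.X : RatFunc ℚ) * X + 1) = 1 + r := by
    simp only [map_add, map_mul, map_one, hevX, hevC, hφX]; rw [hts]; ring
  have h1r : (0:ℝ) < 1 + r := by positivity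
  have hB0ne : (C (RatFunc.X : RatFunc ℚ) * X + 1) ≠ 0 := by
    intro h
    rw [h, map_zero] at hB0ev
    linarith
  have hB0Kne : (1 : RatFunc (RatFunc ℚ)) + RatFunc.C (RatFunc.X : RatFunc ℚ) * RatFunc.X ≠ 0 := by
    rw [← hB0K]
    exact (map_ne_zero_iff _ hιinj).mpr hB0ne
  -- main induction
  have key : ∃ a b : (RatFunc ℚ)[X], ev b ≠ 0 ∧
      ι b * (RatFunc.X ^ (2*n) * (2 + RatFunc.C (RatFunc.X : RatFunc ℚ) * RatFunc.X)
        / (1 + RatFunc.C (RatFunc.X : RatFunc ℚ) * RatFunc.X)) = ι a ∧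
      ev a / ev b ∈ φ.fieldRange := by
    refine Algebra.adjoin_induction
      (p := fun z _ => ∃ a b : (RatFunc ℚ)[X], ev b ≠ 0 ∧ ι b * z = ι a ∧
        ev a / ev b ∈ φ.fieldRange) ?_ ?_ ?_ ?_ hmem
    · intro z hz
      rcases hz with hz | hz
      · -- generator x(2+βx)/(1+βx)
        refine ⟨X * (C (RatFunc.X : RatFunc ℚ) * X + 2), C (RatFunc.X : RatFunc ℚ) * X + 1, ?_, ?_, ?_⟩
        · rw [hB0ev]; positivity
        · rw [hz, hB0K]
          field_simp
          simp only [map_mul, map_add, map_ofNat, hιX, hιC]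
          ring
        · have hevA : ev (X * (C (RatFunc.X : RatFunc ℚ) * X + 2)) = s * (r + 2) := by
            simp only [map_mul, map_add, map_ofNat, hevX, hevC, hφX]
            rw [hts]
          rw [hevA, hB0ev]
          have heq : s * (r + 2) / (1 + r) = 2 / t := by
            rw [div_eq_div_iff h1r.ne' ht0, hsdef]
            field_simp
            try linear_combination hr
            try linear_combination r * hr
          rw [heq]
          exact ⟨2 / RatFunc.X, by rw [map_div₀, map_ofNat, hφX]⟩
      · -- generator x^2
        rw [Set.mem_singleton_iff] at hz
        refine ⟨X ^ 2, 1, by simp, ?_, ?_⟩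
        · rw [hz, map_one, one_mul, map_pow, hιX]
        · rw [map_one, div_one, map_pow, hevX]
          refine ⟨2 / RatFunc.X ^ 2, ?_⟩
          rw [map_div₀, map_ofNat, map_pow, hφX, hsdef, div_pow, hr]
    · intro c
      refine ⟨C c, 1, by simp, ?_, ?_⟩
      · rw [map_one, one_mul, hιC, RatFunc.algebraMap_eq_C]
      · rw [map_one, div_one, hevC]
        exact ⟨c, rfl⟩
    · rintro z w _ _ ⟨a1, b1, hb1, hk1, hm1⟩ ⟨a2, b2, hb2, hk2, hm2⟩
      refine ⟨a1 * b2 + a2 * b1, b1 * b2, by simp [hb1, hb2], ?_, ?_⟩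
      · simp only [map_add, map_mul]
        linear_combination ι b2 * hk1 + ι b1 * hk2
      · have heq : ev (a1 * b2 + a2 * b1) / ev (b1 * b2)
            = ev a1 / ev b1 + ev a2 / ev b2 := by
          simp only [map_add, map_mul]
          field_simp
          try ring
        rw [heq]
        exact add_mem hm1 hm2
    · rintro z w _ _ ⟨a1, b1, hb1, hk1, hm1⟩ ⟨a2, b2, hb2, hk2, hm2⟩
      refine ⟨a1 * a2, b1 * b2, by simp [hb1, hb2], ?_, ?_⟩
      · simp only [map_mul]
        linear_combination (ι b2 * w) * hk1 + ι a1 * hk2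
      · have heq : ev (a1 * a2) / ev (b1 * b2) = (ev a1 / ev b1) * (ev a2 / ev b2) := by
          simp only [map_mul]
          field_simp
        rw [heq]
        exact mul_mem hm1 hm2
  obtain ⟨a, b, hb, hKey, hmemR⟩ := key
  -- canonical representation of the target
  have htgt : ι (C (RatFunc.X : RatFunc ℚ) * X + 1)
      * (RatFunc.X ^ (2*n) * (2 + RatFunc.C (RatFunc.X : RatFunc ℚ) * RatFunc.X)
        / (1 + RatFunc.C (RatFunc.X : RatFunc ℚ) * RatFunc.X))
      = ι (X ^ (2*n) * (C (RatFunc.X : RatFunc ℚ) * X + 2)) := by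
    rw [hB0K]
    field_simp
    simp only [map_mul, map_add, map_pow, map_ofNat, hιX, hιC]
    ring
  have hpoly : b * (X ^ (2*n) * (C (RatFunc.X : RatFunc ℚ) * X + 2)) = (C (RatFunc.X : RatFunc ℚ) * X + 1) * a := by
    apply hιinj
    rw [map_mul ι b, map_mul ι (C (RatFunc.X : RatFunc ℚ) * X + 1), ← htgt, ← hKey]
    ring
  have hev2 := congrArg ev hpoly
  rw [map_mul ev b, map_mul ev (C (RatFunc.X : RatFunc ℚ) * X + 1)] at hev2
  have hevB0ne : ev (C (RatFunc.X : RatFunc ℚ) * X + 1) ≠ 0 := by rw [hB0ev]; positivity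
  have hevA0 : ev (X ^ (2*n) * (C (RatFunc.X : RatFunc ℚ) * X + 2)) = s ^ (2*n) * (r + 2) := by
    simp only [map_mul, map_add, map_pow, map_ofNat, hevX, hevC, hφX]
    rw [hts]
  have hA0B0 : s ^ (2*n) * (r + 2) / (1 + r) = ev a / ev b := by
    rw [div_eq_div_iff h1r.ne' hb, ← hevA0, ← hB0ev]
    linear_combination hev2
  have hform : s ^ (2*n) * (r + 2) / (1 + r) = s ^ (2*n) * r := by
    rw [div_eq_iff h1r.ne']
    linear_combination (- s ^ (2*n)) * hr
  have hmem2 : s ^ (2*n) * r ∈ φ.fieldRange := by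
    rw [← hform, hA0B0]; exact hmemR
  have hs2n_mem : s ^ (2*n) ∈ φ.fieldRange := by
    refine ⟨(2 / RatFunc.X ^ 2) ^ n, ?_⟩
    rw [map_pow, map_div₀, map_ofNat, map_pow, hφX, pow_mul]
    congr 1
    rw [hsdef, div_pow, hr]
  have hs2n0 : s ^ (2*n) ≠ 0 := pow_ne_zero _ hs0
  have hrmem : r ∈ φ.fieldRange := by
    have hd := div_mem hmem2 hs2n_mem
    rwa [mul_comm, mul_div_assoc, div_self hs2n0, mul_one] at hd
  obtain ⟨w, hw⟩ := hrmem
  apply no_ratfunc_sqrt2 w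
  apply RingHom.injective φ
  rw [map_mul, hw, map_ofNat, ← hr]
  ring
end

section
/- For any number N of variables, each coefficient GQ_n(x_1,…,x_N) of z^n in z·[∏_{i=1}^N(1 + x_i(z+β))∏_{i=1}^N(1+βx_i) - ∏_{i=1}^N(1 - x_iz)]/[(z+β)·∏_{i=1}^N(1 - x_iz)] is a polynomial in x_1,…,x_N with coefficients in ℤ[β]. -/
open PowerSeries

set_option maxHeartbeats 1600000 in
set_option synthInstance.maxHeartbeats 400000 in
/-- For any number `N` of variables, each coefficient `GQ_n(x_1,…,x_N)` of `z^n` in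
`z·[∏(1+x_i(z+β))∏(1+βx_i) - ∏(1-x_i z)]/[(z+β)∏(1-x_i z)]` lies in
`ℤ[β][x_1,…,x_N]`. -/
theorem GQ_coefficients_integral (N : ℕ) :
    letI A := MvPolynomial (Fin N) (Polynomial ℤ)
    letI K := FractionRing A
    letI φ := algebraMap A K
    letI β : A := MvPolynomial.C Polynomial.X
    letI x : Fin N → A := fun i => MvPolynomial.X i
    letI G : PowerSeries K :=
      PowerSeries.X *
        ((∏ i : Fin N,
            (1 + PowerSeries.C (φ (x i)) * (PowerSeries.X + PowerSeries.C (φ β)))) *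
          (∏ i : Fin N, PowerSeries.C (φ (1 + β * x i)))
         - ∏ i : Fin N, (1 - PowerSeries.C (φ (x i)) * PowerSeries.X)) *
        ((PowerSeries.X + PowerSeries.C (φ β)) *
          ∏ i : Fin N, (1 - PowerSeries.C (φ (x i)) * PowerSeries.X))⁻¹
    ∀ n : ℕ, ∃ a : A, PowerSeries.coeff n G = φ a := by
  intro n
  classical
  let A := MvPolynomial (Fin N) (Polynomial ℤ)
  let K := FractionRing A
  let φ := algebraMap A K
  let β : A := MvPolynomial.C Polynomial.X
  let x : Fin N → A := fun i => MvPolynomial.X i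
  show ∃ a : A, PowerSeries.coeff n
      (PowerSeries.X *
        ((∏ i : Fin N,
            (1 + PowerSeries.C (φ (x i)) * (PowerSeries.X + PowerSeries.C (φ β)))) *
          (∏ i : Fin N, PowerSeries.C (φ (1 + β * x i)))
         - ∏ i : Fin N, (1 - PowerSeries.C (φ (x i)) * PowerSeries.X)) *
        ((PowerSeries.X + PowerSeries.C (φ β)) *
          ∏ i : Fin N, (1 - PowerSeries.C (φ (x i)) * PowerSeries.X))⁻¹) = φ a
  set G : PowerSeries K := PowerSeries.X *
        ((∏ i : Fin N,
            (1 + PowerSeries.C (φ (x i)) * (PowerSeries.X + PowerSeries.C (φ β)))) *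
          (∏ i : Fin N, PowerSeries.C (φ (1 + β * x i)))
         - ∏ i : Fin N, (1 - PowerSeries.C (φ (x i)) * PowerSeries.X)) *
        ((PowerSeries.X + PowerSeries.C (φ β)) *
          ∏ i : Fin N, (1 - PowerSeries.C (φ (x i)) * PowerSeries.X))⁻¹ with hG
  -- polynomial numerator over A
  set p : Polynomial A :=
    Polynomial.X * ((∏ i : Fin N, (1 + Polynomial.C (x i) * (Polynomial.X + Polynomial.C β))) *
      (∏ i : Fin N, Polynomial.C (1 + β * x i))
      - ∏ i : Fin N, (1 - Polynomial.C (x i) * Polynomial.X)) with hp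
  have hdvd : (Polynomial.X + Polynomial.C β) ∣ p := by
    have h1 : Polynomial.X + Polynomial.C β = Polynomial.X - Polynomial.C (-β) := by
      simp [sub_neg_eq_add]
    rw [h1, Polynomial.dvd_iff_isRoot]
    simp only [Polynomial.IsRoot, hp, Polynomial.eval_mul, Polynomial.eval_sub,
      Polynomial.eval_prod, Polynomial.eval_add, Polynomial.eval_one, Polynomial.eval_C,
      Polynomial.eval_X, neg_add_cancel, mul_zero, add_zero, Finset.prod_const_one, one_mul]
    have h2 : ∀ i : Fin N, (1 : A) - x i * (-β) = 1 + β * x i := by intro i; ring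
    rw [Finset.prod_congr rfl fun i _ => h2 i]
    ring
  obtain ⟨q, hq⟩ := hdvd
  -- denominator pieces over A
  set P : PowerSeries A := ∏ i : Fin N, (1 - PowerSeries.C (x i) * PowerSeries.X) with hP
  have hPc : constantCoeff P = (1 : Aˣ) := by
    simp [hP, map_prod]
  set Q : PowerSeries A := PowerSeries.invOfUnit P 1 with hQ
  have hPQ : P * Q = 1 := PowerSeries.mul_invOfUnit P 1 hPc
  -- injectivity and nonvanishing
  have hinj : Function.Injective φ := IsFractionRing.injective A K
  have hβ : φ β ≠ 0 := by
    intro h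
    have h0 : β = 0 := hinj (by simpa using h)
    have h1 : (Polynomial.X : Polynomial ℤ) = 0 :=
      MvPolynomial.C_injective (Fin N) (Polynomial ℤ) (h0.trans (map_zero _).symm)
    exact Polynomial.X_ne_zero h1
  -- denominator over K
  set D : PowerSeries K := (PowerSeries.X + PowerSeries.C (φ β)) *
      ∏ i : Fin N, (1 - PowerSeries.C (φ (x i)) * PowerSeries.X) with hD
  have hDc : constantCoeff D ≠ 0 := by
    have : constantCoeff D = φ β := by
      rw [hD, map_mul, map_prod]
      simp
    rw [this]; exact hβ
  have hDinv : D * D⁻¹ = 1 := PowerSeries.mul_inv_cancel D hDc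
  -- the coercion-then-map ring hom
  set ψ : Polynomial A →+* PowerSeries K :=
    (PowerSeries.map φ).comp (Polynomial.coeToPowerSeries.ringHom) with hψ
  have hψX : ψ Polynomial.X = PowerSeries.X := by
    simp [hψ, Polynomial.coeToPowerSeries.ringHom_apply, Polynomial.coe_X]
  have hψC : ∀ a : A, ψ (Polynomial.C a) = PowerSeries.C (φ a) := by
    intro a
    simp [hψ, Polynomial.coeToPowerSeries.ringHom_apply, Polynomial.coe_C]
  have hmapP : PowerSeries.map φ P =
      ∏ i : Fin N, (1 - PowerSeries.C (φ (x i)) * PowerSeries.X) := by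
    rw [hP, map_prod]
    simp
  have hmapp : ψ p =
      PowerSeries.X *
        ((∏ i : Fin N,
            (1 + PowerSeries.C (φ (x i)) * (PowerSeries.X + PowerSeries.C (φ β)))) *
          (∏ i : Fin N, PowerSeries.C (φ (1 + β * x i)))
         - ∏ i : Fin N, (1 - PowerSeries.C (φ (x i)) * PowerSeries.X)) := by
    rw [hp]
    simp only [map_mul, map_sub, RingHom.map_sub, map_prod, map_add, map_one, hψX, hψC]
    congr 1
    refine Eq.trans (map_sub ψ _ _) ?_
    simp only [map_mul, map_prod, map_add, map_one, hψX, hψC]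
    congr 1
    refine Finset.prod_congr rfl fun i _ => ?_
    refine Eq.trans (map_sub ψ _ _) ?_
    simp only [map_mul, map_one, hψX, hψC]
  -- main identity
  have key : G = PowerSeries.map φ ((↑q : PowerSeries A) * Q) := by
    have h3 : PowerSeries.map φ ((↑q : PowerSeries A) * Q) * D = ψ p := by
      have hsplit : ψ p = (PowerSeries.X + PowerSeries.C (φ β)) * ψ q := by
        rw [hq, map_mul, map_add, hψX, hψC]
      have hqcoe : ψ q = PowerSeries.map φ (↑q : PowerSeries A) := rfl
      rw [hsplit, hqcoe, hD, ← hmapP, map_mul]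
      calc PowerSeries.map φ ↑q * PowerSeries.map φ Q *
            ((PowerSeries.X + PowerSeries.C (φ β)) * PowerSeries.map φ P)
          = (PowerSeries.X + PowerSeries.C (φ β)) * PowerSeries.map φ ↑q *
            (PowerSeries.map φ P * PowerSeries.map φ Q) := by ring
        _ = (PowerSeries.X + PowerSeries.C (φ β)) * PowerSeries.map φ ↑q := by
            rw [← map_mul, hPQ, map_one, mul_one]
    have hG' : G = ψ p * D⁻¹ := by rw [hG, hmapp]
    rw [hG', ← h3, mul_assoc, hDinv, mul_one]
  exact ⟨PowerSeries.coeff n ((↑q : PowerSeries A) * Q), by rw [key, PowerSeries.coeff_map]⟩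
end

section
/- Cauchy identity: ∏_{i,j} (1 - x̄_i y_j)/(1 - x_i y_j) = exp(2 ∑_{m odd} p_m^{(β)}(x) p_m^{[β]}(y)/m), where p_m^{(β)}(x) = p_m(x/(1+(β/2)x)) and p_m^{[β]}(y) is given by the formal substitution y ↦ y + β/2 minus the constant term; equivalently the kernel equals ∑_{λ ∈ OP} 2^{ℓ(λ)} z_λ^{-1} p_λ^{(β)}(x) p_λ^{[β]}(y), the sum over odd partitions λ, with z_λ = ∏_i i^{m_i} m_i!. -/
set_option linter.unusedSectionVars false
noncomputable section

open MvPowerSeries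

/-- The base field `ℚ(β)`. -/
abbrev Kβ : Type := RatFunc ℚ

/-- The parameter `β`. -/
def βK : Kβ := RatFunc.X

/-- Variables: `x_1,…,x_M` and `y_1,…,y_N`. -/
abbrev σMN (M N : ℕ) := Fin M ⊕ Fin N

def xV (M N : ℕ) (i : Fin M) : MvPowerSeries (σMN M N) Kβ :=
  MvPowerSeries.X (Sum.inl i)

def yV (M N : ℕ) (j : Fin N) : MvPowerSeries (σMN M N) Kβ :=
  MvPowerSeries.X (Sum.inr j)

/-- `x̄_i = -x_i/(1 + βx_i)`. -/
def xbarV (M N : ℕ) (i : Fin M) : MvPowerSeries (σMN M N) Kβ :=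
  -(xV M N i) * (1 + MvPowerSeries.C (σ := σMN M N) (R := Kβ) βK * xV M N i)⁻¹

/-- The K-theoretic Cauchy kernel `∏_{i,j} (1 - x̄_i y_j)/(1 - x_i y_j)`. -/
def cauchyKernel (M N : ℕ) : MvPowerSeries (σMN M N) Kβ :=
  ∏ i : Fin M, ∏ j : Fin N,
    (1 - xbarV M N i * yV M N j) * (1 - xV M N i * yV M N j)⁻¹

/-- `p_m^{(β)}(x) = ∑_i (x_i/(1+(β/2)x_i))^m`. -/
def pBeta (M N m : ℕ) : MvPowerSeries (σMN M N) Kβ :=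
  ∑ i : Fin M,
    (xV M N i * (1 + MvPowerSeries.C (σ := σMN M N) (R := Kβ) (βK / 2) * xV M N i)⁻¹) ^ m

/-- `p_m^{[β]}(y) = ∑_{k=0}^{m-1} C(m,k)(β/2)^k p_{m-k}(y)`. -/
def pBetaDual (M N m : ℕ) : MvPowerSeries (σMN M N) Kβ :=
  ∑ k ∈ Finset.range m,
    MvPowerSeries.C (σ := σMN M N) (R := Kβ) ((m.choose k : Kβ) * (βK / 2) ^ k) *
      ∑ j : Fin N, (yV M N j) ^ (m - k)

/-- The series `2 ∑_{m odd} p_m^{(β)}(x) p_m^{[β]}(y)/m`, defined coefficientwise: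
only `m ≤ |d|` can contribute to the coefficient of a monomial `d`. -/
def cauchyExponent (M N : ℕ) : MvPowerSeries (σMN M N) Kβ :=
  fun d : (σMN M N →₀ ℕ) =>
    ∑ m ∈ Finset.range (d.sum (fun _ n => n) + 1),
      if Odd m then
        (2 / (m : Kβ)) *
          MvPowerSeries.coeff (R := Kβ) d (pBeta M N m * pBetaDual M N m)
      else 0

/-- `exp` of the exponent series, defined coefficientwise:
`exp(S) = ∑_j S^j/j!`, and only `j ≤ |d|` can contribute to the coefficient of `d`
since `S` has zero constant term. -/
def cauchyExp (M N : ℕ) : MvPowerSeries (σMN M N) Kβ :=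
  fun d : (σMN M N →₀ ℕ) =>
    ∑ j ∈ Finset.range (d.sum (fun _ n => n) + 1),
      (1 / (j.factorial : Kβ)) *
        MvPowerSeries.coeff (R := Kβ) d ((cauchyExponent M N) ^ j)


section Aux

instance : CharZero Kβ := by
  apply charZero_of_injective_algebraMap (R := ℚ)
  exact (algebraMap ℚ (RatFunc ℚ)).injective

variable {σ K : Type} [DecidableEq σ] [Field K]

/-- weight of a monomial -/
def wtd (d : σ →₀ ℕ) : ℕ := d.sum fun _ n => n

lemma wtd_add (a b : σ →₀ ℕ) : wtd (a + b) = wtd a + wtd b := by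
  exact Finsupp.sum_add_index' (f := a) (g := b) (h := fun _ n => n) (fun _ => rfl) (fun _ _ _ => rfl)

lemma wtd_eq_zero {d : σ →₀ ℕ} (h : wtd d = 0) : d = 0 := by
  ext s
  by_cases hs : s ∈ d.support
  · exact absurd (Finset.sum_eq_zero_iff.mp h s hs) (Finsupp.mem_support_iff.mp hs)
  · simpa using Finsupp.notMem_support_iff.mp hs

lemma coeff_pow_eq_zero {S : MvPowerSeries σ K} (hS : constantCoeff (σ := σ) (R := K) S = 0)
    {d : σ →₀ ℕ} {j : ℕ} (h : wtd d < j) : coeff (R := K) d (S ^ j) = 0 := by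
  induction j generalizing d with
  | zero => omega
  | succ j ih =>
    rw [pow_succ, mul_comm, coeff_mul]
    apply Finset.sum_eq_zero
    rintro ⟨a, b⟩ hab
    rw [Finset.HasAntidiagonal.mem_antidiagonal] at hab
    by_cases ha : a = 0
    · subst ha
      simp only [coeff_zero_eq_constantCoeff] at *
      rw [hS, zero_mul]
    · have : wtd b < j := by
        have h1 : wtd a + wtd b = wtd d := by rw [← wtd_add, hab]
        have : 0 < wtd a := by
          rcases Nat.eq_zero_or_pos (wtd a) with h0 | h0
          · exact absurd (wtd_eq_zero h0) ha
          · exact h0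
        omega
      rw [ih this, mul_zero]

lemma sq_antidiag {M : Type*} [AddCommMonoid M] (n : ℕ) (F : ℕ → ℕ → M)
    (hF : ∀ p q, n < p + q → F p q = 0) :
    ∑ p ∈ Finset.range (n+1), ∑ q ∈ Finset.range (n+1), F p q
      = ∑ j ∈ Finset.range (n+1), ∑ pq ∈ Finset.HasAntidiagonal.antidiagonal j, F pq.1 pq.2 := by
  have hdisj : (↑(Finset.range (n+1)) : Set ℕ).PairwiseDisjoint
      (fun j => (Finset.HasAntidiagonal.antidiagonal j : Finset (ℕ × ℕ))) := by
    intro i _ j _ hij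
    simp only [Finset.disjoint_left]
    rintro ⟨p, q⟩ hp hq
    rw [Finset.HasAntidiagonal.mem_antidiagonal] at hp hq
    exact hij (hp ▸ hq)
  rw [← Finset.sum_product', ← Finset.sum_biUnion hdisj]
  symm
  apply Finset.sum_subset
  · intro pq hpq
    rw [Finset.mem_biUnion] at hpq
    obtain ⟨j, hj, hpq⟩ := hpq
    rw [Finset.HasAntidiagonal.mem_antidiagonal] at hpq
    rw [Finset.mem_range] at hj
    rw [Finset.mem_product, Finset.mem_range, Finset.mem_range]
    omega
  · intro pq hpq hnpq
    apply hF
    by_contra hle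
    apply hnpq
    rw [Finset.mem_biUnion]
    exact ⟨pq.1 + pq.2, Finset.mem_range.mpr (by omega), Finset.HasAntidiagonal.mem_antidiagonal.mpr rfl⟩

/-- substitution of a constant-term-zero multivariate series into a univariate series,
defined coefficientwise. -/
def substS (S : MvPowerSeries σ K) (f : PowerSeries K) : MvPowerSeries σ K :=
  fun d => ∑ m ∈ Finset.range (wtd d + 1), (PowerSeries.coeff (R := K) m f) * coeff (R := K) d (S ^ m)

lemma coeff_substS (S : MvPowerSeries σ K) (f : PowerSeries K) (d : σ →₀ ℕ) :
    coeff (R := K) d (substS S f)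
      = ∑ m ∈ Finset.range (wtd d + 1), (PowerSeries.coeff (R := K) m f) * coeff (R := K) d (S ^ m) := rfl

lemma coeff_substS_ext {S : MvPowerSeries σ K} (hS : constantCoeff (σ := σ) (R := K) S = 0)
    (f : PowerSeries K) {d : σ →₀ ℕ} {L : ℕ} (hL : wtd d < L) :
    coeff (R := K) d (substS S f)
      = ∑ m ∈ Finset.range L, (PowerSeries.coeff (R := K) m f) * coeff (R := K) d (S ^ m) := by
  rw [coeff_substS]
  apply Finset.sum_subset
  · intro m hm; rw [Finset.mem_range] at *; omega
  · intro m hm hnm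
    rw [Finset.mem_range] at hm hnm
    rw [coeff_pow_eq_zero hS (by omega), mul_zero]

lemma substS_add (S : MvPowerSeries σ K) (f g : PowerSeries K) :
    substS S (f + g) = substS S f + substS S g := by
  ext d
  show coeff (R := K) d (substS S (f+g)) = coeff (R := K) d (substS S f) + coeff (R := K) d (substS S g)
  simp only [coeff_substS, ← Finset.sum_add_distrib, map_add, add_mul]

lemma substS_one (S : MvPowerSeries σ K) : substS S 1 = 1 := by
  ext d
  show coeff (R := K) d (substS S 1) = coeff (R := K) d 1
  rw [coeff_substS, Finset.sum_eq_single 0]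
  · simp
  · intro m _ hm
    rw [PowerSeries.coeff_one, if_neg hm, zero_mul]
  · simp

lemma substS_C (S : MvPowerSeries σ K) (c : K) :
    substS S (PowerSeries.C (R := K) c) = MvPowerSeries.C (σ := σ) (R := K) c := by
  ext d
  show coeff (R := K) d (substS S _) = coeff (R := K) d _
  rw [coeff_substS, Finset.sum_eq_single 0]
  · simp [MvPowerSeries.coeff_one, MvPowerSeries.coeff_C, mul_ite]
  · intro m _ hm
    rw [PowerSeries.coeff_C, if_neg hm, zero_mul]
  · simp

lemma substS_X {S : MvPowerSeries σ K} (hS : constantCoeff (σ := σ) (R := K) S = 0) :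
    substS S PowerSeries.X = S := by
  ext d
  show coeff (R := K) d (substS S _) = coeff (R := K) d S
  rw [coeff_substS_ext hS _ (Nat.lt_succ_of_le (Nat.le_succ_of_le (Nat.le_refl _))),
    Finset.sum_eq_single 1]
  · simp
  · intro m _ hm
    rw [PowerSeries.coeff_X, if_neg hm, zero_mul]
  · intro h
    exact absurd (Finset.mem_range.mpr (by omega)) h

lemma substS_mul {S : MvPowerSeries σ K} (hS : constantCoeff (σ := σ) (R := K) S = 0)
    (f g : PowerSeries K) : substS S (f * g) = substS S f * substS S g := by
  ext d
  set n := wtd d with hn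
  rw [coeff_mul]
  have step1 : ∀ pq ∈ Finset.HasAntidiagonal.antidiagonal d,
      coeff (R := K) pq.1 (substS S f) * coeff (R := K) pq.2 (substS S g)
        = ∑ p ∈ Finset.range (n+1), ∑ q ∈ Finset.range (n+1),
            (PowerSeries.coeff (R := K) p f * PowerSeries.coeff (R := K) q g)
              * (coeff (R := K) pq.1 (S ^ p) * coeff (R := K) pq.2 (S ^ q)) := by
    rintro ⟨a, b⟩ hab
    rw [Finset.HasAntidiagonal.mem_antidiagonal] at hab
    have hwa : wtd a < n + 1 := by
      have := wtd_add a b; rw [hab] at this; omega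
    have hwb : wtd b < n + 1 := by
      have := wtd_add a b; rw [hab] at this; omega
    rw [coeff_substS_ext hS f hwa, coeff_substS_ext hS g hwb, Finset.sum_mul]
    apply Finset.sum_congr rfl
    intro p _
    rw [Finset.mul_sum]
    apply Finset.sum_congr rfl
    intro q _
    ring
  rw [Finset.sum_congr rfl step1]
  rw [Finset.sum_comm]
  have step2 : ∀ p ∈ Finset.range (n+1),
      (∑ pq ∈ Finset.HasAntidiagonal.antidiagonal d, ∑ q ∈ Finset.range (n+1),
        (PowerSeries.coeff (R := K) p f * PowerSeries.coeff (R := K) q g)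
          * (coeff (R := K) pq.1 (S ^ p) * coeff (R := K) pq.2 (S ^ q)))
      = ∑ q ∈ Finset.range (n+1),
          (PowerSeries.coeff (R := K) p f * PowerSeries.coeff (R := K) q g) * coeff (R := K) d (S ^ (p+q)) := by
    intro p _
    rw [Finset.sum_comm]
    apply Finset.sum_congr rfl
    intro q _
    rw [pow_add, coeff_mul, Finset.mul_sum]
  rw [Finset.sum_congr rfl step2]
  rw [sq_antidiag n _ (fun p q hpq => by rw [coeff_pow_eq_zero hS hpq, mul_zero])]
  rw [coeff_substS]
  apply Finset.sum_congr rfl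
  intro j hj
  rw [PowerSeries.coeff_mul, Finset.sum_mul]
  apply Finset.sum_congr rfl
  intro pq hpq
  rw [Finset.HasAntidiagonal.mem_antidiagonal] at hpq
  rw [hpq]

lemma substS_pow {S : MvPowerSeries σ K} (hS : constantCoeff (σ := σ) (R := K) S = 0)
    (f : PowerSeries K) (j : ℕ) : substS S (f ^ j) = (substS S f) ^ j := by
  induction j with
  | zero => simpa using substS_one S
  | succ j ih => rw [pow_succ, pow_succ, substS_mul hS, ih]

lemma ps_coeff_pow_eq_zero {g : PowerSeries K} (hg : PowerSeries.constantCoeff (R := K) g = 0)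
    {m j : ℕ} (h : m < j) : PowerSeries.coeff (R := K) m (g ^ j) = 0 := by
  induction j generalizing m with
  | zero => omega
  | succ j ih =>
    rw [pow_succ, mul_comm, PowerSeries.coeff_mul]
    apply Finset.sum_eq_zero
    rintro ⟨a, b⟩ hab
    rw [Finset.HasAntidiagonal.mem_antidiagonal] at hab
    by_cases ha : a = 0
    · subst ha
      simp only [PowerSeries.coeff_zero_eq_constantCoeff] at *
      rw [hg, zero_mul]
    · have : b < j := by omega
      rw [ih this, mul_zero]

variable [CharZero K]

/-- coefficientwise exponential -/
def myExp (S : MvPowerSeries σ K) : MvPowerSeries σ K :=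
  fun d => ∑ j ∈ Finset.range (wtd d + 1),
    (1 / (j.factorial : K)) * coeff (R := K) d (S ^ j)

lemma coeff_myExp (S : MvPowerSeries σ K) (d : σ →₀ ℕ) :
    coeff (R := K) d (myExp S)
      = ∑ j ∈ Finset.range (wtd d + 1), (1 / (j.factorial : K)) * coeff (R := K) d (S ^ j) := rfl

lemma coeff_myExp_ext {S : MvPowerSeries σ K} (hS : constantCoeff (σ := σ) (R := K) S = 0)
    {d : σ →₀ ℕ} {L : ℕ} (hL : wtd d < L) :
    coeff (R := K) d (myExp S)
      = ∑ j ∈ Finset.range L, (1 / (j.factorial : K)) * coeff (R := K) d (S ^ j) := by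
  rw [coeff_myExp]
  apply Finset.sum_subset
  · intro m hm; rw [Finset.mem_range] at *; omega
  · intro m hm hnm
    rw [Finset.mem_range] at hm hnm
    rw [coeff_pow_eq_zero hS (by omega), mul_zero]

lemma constantCoeff_myExp (S : MvPowerSeries σ K) :
    constantCoeff (σ := σ) (R := K) (myExp S) = 1 := by
  have : constantCoeff (σ := σ) (R := K) (myExp S) = coeff (R := K) 0 (myExp S) := rfl
  rw [this, coeff_myExp]
  have hw : wtd (0 : σ →₀ ℕ) = 0 := by simp [wtd]
  rw [hw]
  simp

lemma coeff_mul_pow_eq_zero {A B : MvPowerSeries σ K}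
    (hA : constantCoeff (σ := σ) (R := K) A = 0) (hB : constantCoeff (σ := σ) (R := K) B = 0)
    {d : σ →₀ ℕ} {p q : ℕ} (h : wtd d < p + q) : coeff (R := K) d (A ^ p * B ^ q) = 0 := by
  rw [coeff_mul]
  apply Finset.sum_eq_zero
  rintro ⟨a, b⟩ hab
  rw [Finset.HasAntidiagonal.mem_antidiagonal] at hab
  dsimp only
  have hw : wtd a + wtd b = wtd d := by rw [← wtd_add, hab]
  by_cases hp : wtd a < p
  · rw [coeff_pow_eq_zero hA hp, zero_mul]
  · rw [coeff_pow_eq_zero hB (show wtd b < q by omega), mul_zero]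

lemma myExp_zero : myExp (0 : MvPowerSeries σ K) = 1 := by
  ext d
  show coeff (R := K) d (myExp 0) = coeff (R := K) d 1
  rw [coeff_myExp, Finset.sum_eq_single 0]
  · simp
  · intro j _ hj
    rw [zero_pow hj, map_zero, mul_zero]
  · simp

lemma myExp_add {A B : MvPowerSeries σ K}
    (hA : constantCoeff (σ := σ) (R := K) A = 0) (hB : constantCoeff (σ := σ) (R := K) B = 0) :
    myExp (A + B) = myExp A * myExp B := by
  ext d
  set n := wtd d with hn
  show coeff (R := K) d (myExp (A+B)) = coeff (R := K) d (myExp A * myExp B)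
  -- RHS
  rw [coeff_mul]
  have step1 : ∀ pq ∈ Finset.HasAntidiagonal.antidiagonal d,
      coeff (R := K) pq.1 (myExp A) * coeff (R := K) pq.2 (myExp B)
        = ∑ p ∈ Finset.range (n+1), ∑ q ∈ Finset.range (n+1),
            ((1 / (p.factorial : K)) * (1 / (q.factorial : K)))
              * (coeff (R := K) pq.1 (A ^ p) * coeff (R := K) pq.2 (B ^ q)) := by
    rintro ⟨a, b⟩ hab
    rw [Finset.HasAntidiagonal.mem_antidiagonal] at hab
    have hw := wtd_add a b
    rw [hab] at hw
    rw [coeff_myExp_ext hA (d := a) (L := n+1) (by omega),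
      coeff_myExp_ext hB (d := b) (L := n+1) (by omega), Finset.sum_mul]
    apply Finset.sum_congr rfl
    intro p _
    rw [Finset.mul_sum]
    apply Finset.sum_congr rfl
    intro q _
    ring
  rw [Finset.sum_congr rfl step1, Finset.sum_comm]
  have step2 : ∀ p ∈ Finset.range (n+1),
      (∑ pq ∈ Finset.HasAntidiagonal.antidiagonal d, ∑ q ∈ Finset.range (n+1),
        ((1 / (p.factorial : K)) * (1 / (q.factorial : K)))
          * (coeff (R := K) pq.1 (A ^ p) * coeff (R := K) pq.2 (B ^ q)))
      = ∑ q ∈ Finset.range (n+1),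
          ((1 / (p.factorial : K)) * (1 / (q.factorial : K)))
            * coeff (R := K) d (A ^ p * B ^ q) := by
    intro p _
    rw [Finset.sum_comm]
    apply Finset.sum_congr rfl
    intro q _
    rw [coeff_mul, Finset.mul_sum]
  rw [Finset.sum_congr rfl step2]
  rw [sq_antidiag n _ (fun p q hpq => by rw [coeff_mul_pow_eq_zero hA hB hpq, mul_zero])]
  -- LHS
  rw [coeff_myExp]
  apply Finset.sum_congr rfl
  intro j hj
  rw [add_pow, map_sum, Finset.mul_sum,
    Finset.Nat.sum_antidiagonal_eq_sum_range_succ_mk]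
  apply Finset.sum_congr rfl
  intro p hp
  rw [Finset.mem_range] at hp
  have hpj : p ≤ j := by omega
  have key : (1 / (j.factorial : K)) * (j.choose p : K)
      = (1 / (p.factorial : K)) * (1 / ((j - p).factorial : K)) := by
    have h1 : j.choose p * p.factorial * (j - p).factorial = j.factorial :=
      Nat.choose_mul_factorial_mul_factorial hpj
    have h2 : ((j.choose p : K)) * (p.factorial : K) * ((j - p).factorial : K)
        = (j.factorial : K) := by exact_mod_cast congrArg (Nat.cast (R := K)) h1
    have hp0 : (p.factorial : K) ≠ 0 := by exact_mod_cast p.factorial_ne_zero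
    have hq0 : ((j - p).factorial : K) ≠ 0 := by exact_mod_cast (j - p).factorial_ne_zero
    have hj0 : (j.factorial : K) ≠ 0 := by exact_mod_cast j.factorial_ne_zero
    field_simp
    linear_combination h2
  dsimp only
  rw [← map_natCast (C (σ := σ) (R := K)) (j.choose p), coeff_mul_C]
  linear_combination (coeff (R := K) d (A ^ p * B ^ (j - p))) * key

lemma constantCoeff_substS (S : MvPowerSeries σ K) (f : PowerSeries K) :
    constantCoeff (σ := σ) (R := K) (substS S f) = PowerSeries.constantCoeff (R := K) f := by
  have h0 : constantCoeff (σ := σ) (R := K) (substS S f) = coeff (R := K) 0 (substS S f) := rfl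
  have hw : wtd (0 : σ →₀ ℕ) = 0 := by simp [wtd]
  rw [h0, coeff_substS, hw]
  simp [PowerSeries.coeff_zero_eq_constantCoeff]

lemma myExp_sum {ι : Type} (t : Finset ι) (F : ι → MvPowerSeries σ K)
    (hF : ∀ i ∈ t, constantCoeff (σ := σ) (R := K) (F i) = 0) :
    myExp (∑ i ∈ t, F i) = ∏ i ∈ t, myExp (F i) := by
  induction t using Finset.cons_induction with
  | empty => simpa using myExp_zero
  | cons a s ha ih =>
    rw [Finset.sum_cons, Finset.prod_cons,
      myExp_add (hF a (Finset.mem_cons_self a s)) (by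
        rw [map_sum]
        exact Finset.sum_eq_zero fun i hi => hF i (Finset.mem_cons_of_mem hi)),
      ih (fun i hi => hF i (Finset.mem_cons_of_mem hi))]

/-- one-variable coefficientwise exponential -/
def expPS (g : PowerSeries K) : PowerSeries K :=
  PowerSeries.mk fun m => ∑ j ∈ Finset.range (m+1),
    (1 / (j.factorial : K)) * PowerSeries.coeff (R := K) m (g ^ j)

lemma coeff_expPS (g : PowerSeries K) (m : ℕ) :
    PowerSeries.coeff (R := K) m (expPS g)
      = ∑ j ∈ Finset.range (m+1), (1 / (j.factorial : K)) * PowerSeries.coeff (R := K) m (g ^ j) :=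
  PowerSeries.coeff_mk m _

lemma coeff_expPS_ext {g : PowerSeries K} (hg : PowerSeries.constantCoeff (R := K) g = 0)
    {m L : ℕ} (hL : m < L) :
    PowerSeries.coeff (R := K) m (expPS g)
      = ∑ j ∈ Finset.range L, (1 / (j.factorial : K)) * PowerSeries.coeff (R := K) m (g ^ j) := by
  rw [coeff_expPS]
  apply Finset.sum_subset
  · intro j hj; rw [Finset.mem_range] at *; omega
  · intro j hj hnj
    rw [Finset.mem_range] at hj hnj
    rw [ps_coeff_pow_eq_zero hg (by omega), mul_zero]

lemma myExp_substS {S : MvPowerSeries σ K} (hS : constantCoeff (σ := σ) (R := K) S = 0)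
    {g : PowerSeries K} (hg : PowerSeries.constantCoeff (R := K) g = 0) :
    myExp (substS S g) = substS S (expPS g) := by
  ext d
  set n := wtd d with hn
  show coeff (R := K) d (myExp (substS S g)) = coeff (R := K) d (substS S (expPS g))
  rw [coeff_myExp, coeff_substS]
  have step1 : ∀ j ∈ Finset.range (n+1),
      (1 / (j.factorial : K)) * coeff (R := K) d ((substS S g) ^ j)
        = ∑ m ∈ Finset.range (n+1),
            (1 / (j.factorial : K)) * (PowerSeries.coeff (R := K) m (g ^ j) * coeff (R := K) d (S ^ m)) := by
    intro j _
    rw [← substS_pow hS, coeff_substS, Finset.mul_sum]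
  rw [Finset.sum_congr rfl step1, Finset.sum_comm]
  apply Finset.sum_congr rfl
  intro m hm
  rw [Finset.mem_range] at hm
  rw [coeff_expPS_ext hg (show m < n + 1 by omega), Finset.sum_mul]
  apply Finset.sum_congr rfl
  intro j _
  ring

/-- `2∑_{m odd} t^m/m` -/
def gOdd : PowerSeries K := PowerSeries.mk fun m => if Odd m then 2 / (m : K) else 0

/-- `(1+t)/(1-t) = 1 + 2t + 2t² + ⋯` -/
def hSeq : PowerSeries K := PowerSeries.mk fun m => if m = 0 then 1 else 2

lemma constantCoeff_gOdd : PowerSeries.constantCoeff (R := K) (gOdd : PowerSeries K) = 0 := by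
  have : PowerSeries.constantCoeff (R := K) (gOdd : PowerSeries K)
      = PowerSeries.coeff (R := K) 0 gOdd := by simp
  rw [this]
  simp [gOdd, Nat.odd_iff]

lemma coeff_deriv_gOdd (n : ℕ) :
    PowerSeries.coeff (R := K) n (PowerSeries.derivative K (gOdd : PowerSeries K))
      = if Even n then 2 else 0 := by
  rw [PowerSeries.coeff_derivative]
  simp only [gOdd, PowerSeries.coeff_mk]
  by_cases h : Even n
  · rw [if_pos (Nat.odd_add_one.mpr (Nat.not_odd_iff_even.mpr h)), if_pos h]
    have hne : ((n : K) + 1) ≠ 0 := by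
      have : ((n+1 : ℕ) : K) ≠ 0 := Nat.cast_ne_zero.mpr (Nat.succ_ne_zero n)
      push_cast at this; exact this
    push_cast
    field_simp
  · rw [if_neg (fun hodd => h (Nat.not_odd_iff_even.mp (Nat.odd_add_one.mp hodd))), if_neg h, zero_mul]

lemma ode_gOdd :
    PowerSeries.derivative K (gOdd : PowerSeries K)
      - PowerSeries.derivative K (gOdd : PowerSeries K) * PowerSeries.X ^ 2
      = PowerSeries.C (R := K) 2 := by
  ext n
  rw [map_sub, PowerSeries.coeff_mul_X_pow', coeff_deriv_gOdd, PowerSeries.coeff_C]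
  rcases n with _ | _ | m
  · simp
  · simp [coeff_deriv_gOdd]
  · have h2 : 2 ≤ m + 2 := by omega
    rw [if_pos h2]
    simp [coeff_deriv_gOdd, show m+1+1-2 = m from rfl, Nat.even_add_one, not_not]

lemma deriv_expPS {g : PowerSeries K} (hg : PowerSeries.constantCoeff (R := K) g = 0) :
    PowerSeries.derivative K (expPS g) = PowerSeries.derivative K g * expPS g := by
  ext n
  rw [PowerSeries.coeff_derivative, coeff_expPS, Finset.sum_mul]
  have step1 : ∀ j ∈ Finset.range (n+2),
      (1 / (j.factorial : K)) * PowerSeries.coeff (R := K) (n+1) (g ^ j) * ((n : K) + 1)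
        = (1 / (j.factorial : K)) * ((j : K)
            * PowerSeries.coeff (R := K) n (g ^ (j-1) * PowerSeries.derivative K g)) := by
    intro j _
    have hd : PowerSeries.coeff (R := K) (n+1) (g ^ j) * ((n : K)+1)
        = PowerSeries.coeff (R := K) n (PowerSeries.derivative K (g ^ j)) := by
      rw [PowerSeries.coeff_derivative]
    rw [mul_assoc, hd, Derivation.leibniz_pow, smul_eq_mul (a := g ^ (j-1)), map_nsmul,
      nsmul_eq_mul]
  rw [Finset.sum_congr rfl step1, Finset.sum_range_succ']
  simp only [Nat.cast_zero, zero_mul, mul_zero, add_zero]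
  have step2 : ∀ i ∈ Finset.range (n+1),
      (1 / (((i+1).factorial : K))) * (((i+1 : ℕ) : K)
          * PowerSeries.coeff (R := K) n (g ^ (i+1-1) * PowerSeries.derivative K g))
        = (1 / ((i.factorial : K)))
            * PowerSeries.coeff (R := K) n (g ^ i * PowerSeries.derivative K g) := by
    intro i _
    have h1 : ((i+1).factorial : K) = ((i+1 : ℕ) : K) * (i.factorial : K) := by
      rw [Nat.factorial_succ]; push_cast; ring
    have h2 : ((i+1 : ℕ) : K) ≠ 0 := Nat.cast_ne_zero.mpr (Nat.succ_ne_zero i)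
    have h3 : ((i.factorial : K)) ≠ 0 := by exact_mod_cast i.factorial_ne_zero
    rw [show i+1-1 = i from rfl, h1]
    have h2' : ((i : K) + 1) ≠ 0 := by push_cast at h2; exact h2
    field_simp
  rw [Finset.sum_congr rfl step2]
  -- now the RHS
  rw [PowerSeries.coeff_mul]
  have step3 : ∀ ab ∈ Finset.HasAntidiagonal.antidiagonal n,
      PowerSeries.coeff (R := K) ab.1 (PowerSeries.derivative K g) * PowerSeries.coeff (R := K) ab.2 (expPS g)
        = ∑ i ∈ Finset.range (n+1), (1 / ((i.factorial : K)))
            * (PowerSeries.coeff (R := K) ab.1 (PowerSeries.derivative K g)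
                * PowerSeries.coeff (R := K) ab.2 (g ^ i)) := by
    rintro ⟨a, b⟩ hab
    rw [Finset.HasAntidiagonal.mem_antidiagonal] at hab
    dsimp only
    rw [coeff_expPS_ext hg (show b < n + 1 by omega), Finset.mul_sum]
    apply Finset.sum_congr rfl
    intro i _
    ring
  rw [Finset.sum_congr rfl step3, Finset.sum_comm]
  apply Finset.sum_congr rfl
  intro i _
  rw [← Finset.mul_sum, ← PowerSeries.coeff_mul, mul_comm (g ^ i) _]

lemma ode_hSeq :
    PowerSeries.derivative K (hSeq : PowerSeries K)
      - PowerSeries.derivative K (hSeq : PowerSeries K) * PowerSeries.X ^ 2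
      = PowerSeries.C (R := K) 2 * hSeq := by
  ext n
  have hc : ∀ m : ℕ, PowerSeries.coeff (R := K) m (PowerSeries.derivative K (hSeq : PowerSeries K))
      = 2 * ((m : K) + 1) := by
    intro m
    rw [PowerSeries.coeff_derivative]
    simp only [hSeq, PowerSeries.coeff_mk, if_neg (Nat.succ_ne_zero m)]
  rw [map_sub, PowerSeries.coeff_mul_X_pow', hc, PowerSeries.coeff_C_mul]
  rcases n with _ | _ | m
  · simp [hSeq]
  · simp only [hSeq, PowerSeries.coeff_mk, if_neg (show ¬(2 ≤ 1) by omega),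
      if_neg (Nat.succ_ne_zero 0)]
    norm_num
  · rw [if_pos (show 2 ≤ m + 2 by omega), hc]
    simp only [hSeq, PowerSeries.coeff_mk, if_neg (Nat.succ_ne_zero (m+1))]
    push_cast [show m+1+1-2 = m from rfl]
    ring

lemma ode_unique {u v : PowerSeries K}
    (h0 : PowerSeries.constantCoeff (R := K) u = PowerSeries.constantCoeff (R := K) v)
    (hu : PowerSeries.derivative K u - PowerSeries.derivative K u * PowerSeries.X ^ 2
      = PowerSeries.C (R := K) 2 * u)
    (hv : PowerSeries.derivative K v - PowerSeries.derivative K v * PowerSeries.X ^ 2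
      = PowerSeries.C (R := K) 2 * v) : u = v := by
  ext n
  induction n using Nat.strong_induction_on with
  | _ n ih =>
    match n with
    | 0 => simpa [PowerSeries.coeff_zero_eq_constantCoeff] using h0
    | (k+1) =>
      have hu' := congrArg (PowerSeries.coeff (R := K) k) hu
      have hv' := congrArg (PowerSeries.coeff (R := K) k) hv
      rw [map_sub, PowerSeries.coeff_mul_X_pow', PowerSeries.coeff_C_mul,
        PowerSeries.coeff_derivative] at hu' hv'
      have e0 : PowerSeries.coeff (R := K) k u = PowerSeries.coeff (R := K) k v := ih k (by omega)
      rw [e0] at hu'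
      have e1 : (if 2 ≤ k then PowerSeries.coeff (R := K) (k-2) (PowerSeries.derivative K u) else 0)
          = (if 2 ≤ k then PowerSeries.coeff (R := K) (k-2) (PowerSeries.derivative K v) else 0) := by
        by_cases h2 : 2 ≤ k
        · rw [if_pos h2, if_pos h2, PowerSeries.coeff_derivative, PowerSeries.coeff_derivative,
            ih (k-2+1) (by omega)]
        · rw [if_neg h2, if_neg h2]
      rw [e1] at hu'
      have key : PowerSeries.coeff (R := K) (k+1) u * ((k : K) + 1)
          = PowerSeries.coeff (R := K) (k+1) v * ((k : K) + 1) := by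
        linear_combination hu' - hv'
      have hne : ((k : K) + 1) ≠ 0 := by
        have : ((k+1 : ℕ) : K) ≠ 0 := Nat.cast_ne_zero.mpr (Nat.succ_ne_zero k)
        push_cast at this; exact this
      exact mul_right_cancel₀ hne key

lemma expPS_gOdd : expPS (gOdd : PowerSeries K) = hSeq := by
  apply ode_unique
  · have h1 : PowerSeries.constantCoeff (R := K) (expPS (gOdd : PowerSeries K))
        = PowerSeries.coeff (R := K) 0 (expPS gOdd) := by simp
    rw [h1, coeff_expPS]
    simp [hSeq]
  · rw [deriv_expPS constantCoeff_gOdd]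
    have := ode_gOdd (K := K)
    linear_combination (expPS (gOdd : PowerSeries K)) * this
  · exact ode_hSeq

lemma hSeq_mul : (hSeq : PowerSeries K) * (1 - PowerSeries.X) = 1 + PowerSeries.X := by
  ext n
  rw [mul_sub, mul_one, map_sub, map_add, PowerSeries.coeff_one, PowerSeries.coeff_X,
    ← pow_one (PowerSeries.X (R := K)), PowerSeries.coeff_mul_X_pow']
  rcases n with _ | _ | m
  · simp [hSeq]
  · simp [hSeq]
    norm_num
  · simp only [hSeq, PowerSeries.coeff_mk, if_pos (show 1 ≤ m + 2 by omega)]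
    norm_num

lemma substS_sub (S : MvPowerSeries σ K) (f g : PowerSeries K) :
    substS S (f - g) = substS S f - substS S g := by
  ext d
  show coeff (R := K) d (substS S (f - g)) = coeff (R := K) d (substS S f) - coeff (R := K) d (substS S g)
  simp only [coeff_substS, ← Finset.sum_sub_distrib, map_sub, sub_mul]

/-- The core identity: `exp(2∑_{m odd} S^m/m) = (1+S)/(1-S)`. -/
lemma myExp_core {S : MvPowerSeries σ K} (hS : constantCoeff (σ := σ) (R := K) S = 0) :
    myExp (substS S gOdd) = (1 + S) * (1 - S)⁻¹ := by
  rw [myExp_substS hS constantCoeff_gOdd, expPS_gOdd]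
  have hunit : constantCoeff (σ := σ) (R := K) (1 - S) ≠ 0 := by
    rw [map_sub, map_one, hS, sub_zero]; exact one_ne_zero
  rw [MvPowerSeries.eq_mul_inv_iff_mul_eq hunit]
  have h1 : (1 - S) = substS S (1 - PowerSeries.X) := by
    rw [substS_sub, substS_one, substS_X hS]
  have h2 : (1 + S) = substS S (1 + PowerSeries.X) := by
    rw [substS_add, substS_one, substS_X hS]
  rw [h1, h2, ← substS_mul hS, hSeq_mul]

/-! ### The specific setting -/

section Specific

variable (M N : ℕ)

example : DecidableEq (σMN M N) := inferInstance

/-- `Q_i = 1 + (β/2)x_i` -/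
def QQ (i : Fin M) : MvPowerSeries (σMN M N) Kβ :=
  1 + MvPowerSeries.C (σ := σMN M N) (R := Kβ) (βK / 2) * xV M N i

/-- `P_i = 1 + βx_i` -/
def PP (i : Fin M) : MvPowerSeries (σMN M N) Kβ :=
  1 + MvPowerSeries.C (σ := σMN M N) (R := Kβ) βK * xV M N i

/-- `X_i = x_i/(1+(β/2)x_i)` -/
def XX (i : Fin M) : MvPowerSeries (σMN M N) Kβ := xV M N i * (QQ M N i)⁻¹

/-- `T_{ij} = X_i (y_j + β/2)` -/
def TT (i : Fin M) (j : Fin N) : MvPowerSeries (σMN M N) Kβ :=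
  XX M N i * (yV M N j + MvPowerSeries.C (σ := σMN M N) (R := Kβ) (βK / 2))

/-- `T⁰_i = X_i β/2` -/
def TT0 (i : Fin M) : MvPowerSeries (σMN M N) Kβ :=
  XX M N i * MvPowerSeries.C (σ := σMN M N) (R := Kβ) (βK / 2)

lemma constantCoeff_XX (i : Fin M) : constantCoeff (σ := σMN M N) (R := Kβ) (XX M N i) = 0 := by
  rw [XX, map_mul, xV, constantCoeff_X, zero_mul]

lemma constantCoeff_TT (i : Fin M) (j : Fin N) :
    constantCoeff (σ := σMN M N) (R := Kβ) (TT M N i j) = 0 := by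
  rw [TT, map_mul, constantCoeff_XX, zero_mul]

lemma constantCoeff_TT0 (i : Fin M) :
    constantCoeff (σ := σMN M N) (R := Kβ) (TT0 M N i) = 0 := by
  rw [TT0, map_mul, constantCoeff_XX, zero_mul]

lemma constantCoeff_QQ (i : Fin M) :
    constantCoeff (σ := σMN M N) (R := Kβ) (QQ M N i) = 1 := by
  rw [QQ, map_add, map_one, map_mul, xV, constantCoeff_X, mul_zero, add_zero]

lemma constantCoeff_PP (i : Fin M) :
    constantCoeff (σ := σMN M N) (R := Kβ) (PP M N i) = 1 := by
  rw [PP, map_add, map_one, map_mul, xV, constantCoeff_X, mul_zero, add_zero]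

lemma QQ_ne (i : Fin M) : constantCoeff (σ := σMN M N) (R := Kβ) (QQ M N i) ≠ 0 := by
  rw [constantCoeff_QQ]; exact one_ne_zero

lemma PP_ne (i : Fin M) : constantCoeff (σ := σMN M N) (R := Kβ) (PP M N i) ≠ 0 := by
  rw [constantCoeff_PP]; exact one_ne_zero

lemma hcβ : MvPowerSeries.C (σ := σMN M N) (R := Kβ) βK
    = MvPowerSeries.C (σ := σMN M N) (R := Kβ) (βK / 2) + MvPowerSeries.C (σ := σMN M N) (R := Kβ) (βK / 2) := by
  rw [← map_add]
  congr 1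
  ring

lemma hpq (i : Fin M) : PP M N i = QQ M N i
    + MvPowerSeries.C (σ := σMN M N) (R := Kβ) (βK / 2) * xV M N i := by
  rw [PP, QQ, hcβ]
  ring

lemma e_one (i : Fin M) (j : Fin N) :
    1 - xbarV M N i * yV M N j = (PP M N i + xV M N i * yV M N j) * (PP M N i)⁻¹ := by
  have hp := MvPowerSeries.inv_mul_cancel (PP M N i) (PP_ne M N i)
  simp only [xbarV, PP] at *
  linear_combination (-1) * hp

lemma e_two (i : Fin M) (j : Fin N) :
    1 + TT M N i j = (PP M N i + xV M N i * yV M N j) * (QQ M N i)⁻¹ := by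
  have hq := MvPowerSeries.inv_mul_cancel (QQ M N i) (QQ_ne M N i)
  have hc := hpq M N i
  simp only [TT, XX]
  linear_combination (-1) * hq - (QQ M N i)⁻¹ * hc

lemma e_three (i : Fin M) (j : Fin N) :
    1 - TT M N i j = (1 - xV M N i * yV M N j) * (QQ M N i)⁻¹ := by
  have hq := MvPowerSeries.inv_mul_cancel (QQ M N i) (QQ_ne M N i)
  have hQQ : QQ M N i = 1 + MvPowerSeries.C (σ := σMN M N) (R := Kβ) (βK / 2) * xV M N i := rfl
  simp only [TT, XX]
  linear_combination (-1) * hq + (QQ M N i)⁻¹ * hQQ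

lemma e_four (i : Fin M) :
    1 + TT0 M N i = PP M N i * (QQ M N i)⁻¹ := by
  have hq := MvPowerSeries.inv_mul_cancel (QQ M N i) (QQ_ne M N i)
  have hc := hpq M N i
  simp only [TT0, XX]
  linear_combination (-1) * hq - (QQ M N i)⁻¹ * hc

lemma e_five (i : Fin M) :
    1 - TT0 M N i = (QQ M N i)⁻¹ := by
  have hq := MvPowerSeries.inv_mul_cancel (QQ M N i) (QQ_ne M N i)
  have hQQ : QQ M N i = 1 + MvPowerSeries.C (σ := σMN M N) (R := Kβ) (βK / 2) * xV M N i := rfl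
  simp only [TT0, XX]
  linear_combination (-1) * hq + (QQ M N i)⁻¹ * hQQ

lemma QQ_inv_inv (i : Fin M) : ((QQ M N i)⁻¹)⁻¹ = QQ M N i := by
  rw [MvPowerSeries.inv_eq_iff_mul_eq_one]
  · exact MvPowerSeries.mul_inv_cancel _ (QQ_ne M N i)
  · rw [constantCoeff_inv, constantCoeff_QQ]
    norm_num

lemma i_five (i : Fin M) : (1 - TT0 M N i)⁻¹ = QQ M N i := by
  rw [e_five, QQ_inv_inv]

lemma i_three (i : Fin M) (j : Fin N) :
    (1 - TT M N i j)⁻¹ = (QQ M N i) * (1 - xV M N i * yV M N j)⁻¹ := by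
  rw [e_three, MvPowerSeries.mul_inv_rev, QQ_inv_inv]

lemma PP_ne_zero (i : Fin M) : PP M N i ≠ 0 := by
  intro h
  apply PP_ne M N i
  rw [h, map_zero]

lemma factor_eq (i : Fin M) (j : Fin N) :
    (1 - xbarV M N i * yV M N j) * (1 - xV M N i * yV M N j)⁻¹
      = myExp (substS (TT M N i j) gOdd - substS (TT0 M N i) gOdd) := by
  have hT := constantCoeff_TT M N i j
  have hT0 := constantCoeff_TT0 M N i
  set L := substS (TT M N i j) gOdd - substS (TT0 M N i) gOdd with hL
  have hLc : constantCoeff (σ := σMN M N) (R := Kβ) L = 0 := by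
    rw [hL, map_sub, constantCoeff_substS, constantCoeff_substS, sub_self]
  have h0c : constantCoeff (σ := σMN M N) (R := Kβ) (substS (TT0 M N i) gOdd) = 0 := by
    rw [constantCoeff_substS, constantCoeff_gOdd]
  have hadd : myExp L * myExp (substS (TT0 M N i) gOdd)
      = myExp (substS (TT M N i j) gOdd) := by
    rw [← myExp_add hLc h0c, hL, sub_add_cancel]
  rw [myExp_core hT, myExp_core hT0, e_two, e_three, e_four, i_five] at hadd
  -- hadd : myExp L * (PP * QQ⁻¹ * QQ) = (PP+xy) * QQ⁻¹ * ((1−xy) * QQ⁻¹)⁻¹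
  rw [MvPowerSeries.mul_inv_rev, QQ_inv_inv] at hadd
  have hq := MvPowerSeries.inv_mul_cancel (QQ M N i) (QQ_ne M N i)
  have hKey : myExp L * PP M N i
      = (PP M N i + xV M N i * yV M N j) * (1 - xV M N i * yV M N j)⁻¹ := by
    linear_combination hadd - (myExp L * PP M N i
      - (PP M N i + xV M N i * yV M N j) * (1 - xV M N i * yV M N j)⁻¹) * hq
  rw [e_one]
  apply mul_right_cancel₀ (PP_ne_zero M N i)
  rw [hKey]
  have hp := MvPowerSeries.inv_mul_cancel (PP M N i) (PP_ne M N i)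
  linear_combination ((PP M N i + xV M N i * yV M N j)
    * (1 - xV M N i * yV M N j)⁻¹) * hp

lemma dual_eq (m : ℕ) : pBetaDual M N m
    = ∑ j : Fin N, ((MvPowerSeries.C (σ := σMN M N) (R := Kβ) (βK/2) + yV M N j) ^ m
        - (MvPowerSeries.C (σ := σMN M N) (R := Kβ) (βK/2)) ^ m) := by
  rw [pBetaDual]
  rw [Finset.sum_congr rfl (fun k _ => Finset.mul_sum _ _ _), Finset.sum_comm]
  apply Finset.sum_congr rfl
  intro j _
  rw [add_pow, Finset.sum_range_succ]
  simp only [Nat.choose_self, Nat.cast_one, mul_one, Nat.sub_self, pow_zero, add_sub_cancel_right]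
  apply Finset.sum_congr rfl
  intro k _
  rw [map_mul, map_pow, map_natCast]
  ring

lemma prod_eq (m : ℕ) : pBeta M N m * pBetaDual M N m
    = ∑ p : Fin M × Fin N, ((TT M N p.1 p.2) ^ m - (TT0 M N p.1) ^ m) := by
  rw [dual_eq, pBeta, Finset.sum_mul_sum, Fintype.sum_prod_type]
  apply Finset.sum_congr rfl
  intro i _
  apply Finset.sum_congr rfl
  intro j _
  rw [mul_sub, ← mul_pow, ← mul_pow, TT, TT0, XX,
    add_comm (yV M N j) (MvPowerSeries.C (σ := σMN M N) (R := Kβ) (βK/2)), QQ]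

lemma exponent_eq : cauchyExponent M N
    = ∑ p : Fin M × Fin N,
        (substS (TT M N p.1 p.2) gOdd - substS (TT0 M N p.1) gOdd) := by
  ext d
  rw [map_sum]
  have hLHS : coeff (R := Kβ) d (cauchyExponent M N)
      = ∑ m ∈ Finset.range (wtd d + 1),
          (PowerSeries.coeff (R := Kβ) m gOdd) * coeff (R := Kβ) d (pBeta M N m * pBetaDual M N m) := by
    show cauchyExponent M N d = _
    rw [cauchyExponent]
    apply Finset.sum_congr rfl
    intro m _
    rw [gOdd, PowerSeries.coeff_mk, ite_mul, zero_mul]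
  rw [hLHS]
  rw [Finset.sum_congr rfl (fun m (_ : m ∈ Finset.range (wtd d + 1)) => by
    rw [prod_eq M N m, map_sum, Finset.mul_sum])]
  rw [Finset.sum_comm]
  apply Finset.sum_congr rfl
  intro p _
  rw [map_sub, coeff_substS, coeff_substS, ← Finset.sum_sub_distrib]
  apply Finset.sum_congr rfl
  intro m _
  rw [map_sub]
  ring

end Specific
end Aux

/-- Cauchy identity:
`∏_{i,j} (1 - x̄_i y_j)/(1 - x_i y_j) = exp(2 ∑_{m odd} p_m^{(β)}(x) p_m^{[β]}(y)/m)`. -/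
theorem cauchy_identity (M N : ℕ) : cauchyKernel M N = cauchyExp M N := by
  have h1 : cauchyExp M N = myExp (cauchyExponent M N) := rfl
  rw [h1, exponent_eq M N, myExp_sum _ _ (fun p _ => by
    rw [map_sub, constantCoeff_substS, constantCoeff_substS, sub_self])]
  rw [cauchyKernel, ← Fintype.prod_prod_type']
  apply Finset.prod_congr rfl
  intro p _
  exact factor_eq M N p.1 p.2

end
end
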